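/- arXiv:1408.0442 — 2 statements merged into one kernel-verified Lean document; each statement's English description precedes it below -/
import Mathlib

section
/- In a weighted voting game with n agents, for any two agents i, j with wᵢ ≤ wⱼ, the difference of Shapley values satisfies φⱼ − φᵢ = (1/(n−1)) Σ_{ℓ=0}^{n−2} Pr_{S}[q − wⱼ ≤ w(S) < q − wᵢ], where S is uniformly random among ℓ-element subsets of N \ {i,j}. -/
/-!
Precomposing an ordering `σ` with the transposition `(i j)` moves `j` into the position of `i`
and maps the predecessors of `i` to those of `j`, with `i` and `j` exchanged. Hence `φⱼ - φᵢ` is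
the average over all orderings of the indicator that the predecessors `S` of `i`, other than `j`,
satisfy `q - wⱼ ≤ w(S) < q - wᵢ`. The orderings with a given set `T` of predecessors of `i` form a
coset of the stabilizer of the pattern "before `i` / `i` / after `i`", so there are
`|T|! (n - 1 - |T|)!` of them, and each `S ⊆ N \ {i, j}` of size `l` (coming from `T = S` or
`T = S ∪ {j}`) carries the weight `(l! (n-1-l)! + (l+1)! (n-2-l)!) / n! = 1 / ((n - 1) * C(n-2, l))`.
-/

/-- The Shapley value of agent `i` in the weighted voting game `(w, q)` on `Fin n`. -/
noncomputable def shapley (n : ℕ) (w : Fin n → ℝ) (q : ℝ) (i : Fin n) : ℝ :=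
  (∑ σ : Equiv.Perm (Fin n),
      ((if q ≤ ∑ j ∈ insert i (Finset.univ.filter fun j => σ j < σ i), w j then (1:ℝ) else 0)
        - (if q ≤ ∑ j ∈ Finset.univ.filter (fun j => σ j < σ i), w j then (1:ℝ) else 0)))
    / (Nat.factorial n)

open Finset Equiv Nat

theorem Equiv.Perm.card_comp_eq_of_card_fiber_eq {α ι : Type*} [Fintype α] [DecidableEq α]
    [Fintype ι] [DecidableEq ι] (f g : α → ι)
    (h : ∀ c, Fintype.card {a // f a = c} = Fintype.card {a // g a = c}) :
    Fintype.card {σ : Perm α // g ∘ σ = f} = ∏ c, (Fintype.card {a // f a = c})! := by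
  let σ₀ : Perm α := ofFiberEquiv fun c => Fintype.equivOfCardEq (h c)
  have hσ₀ : g ∘ σ₀ = f := funext (ofFiberEquiv_map _)
  rw [← DomMulAct.stabilizer_card f]
  refine Fintype.card_congr (subtypeEquiv (Equiv.mulLeft σ₀⁻¹) fun σ => ?_)
  rw [← hσ₀, coe_mulLeft, Perm.coe_mul, ← Function.comp_assoc, Function.comp_assoc g σ₀,
    Perm.coe_inv, self_comp_symm, Function.comp_id]

theorem Finset.map_swap_of_notMem {α : Type*} [DecidableEq α] {s : Finset α} {a b : α}
    (ha : a ∉ s) (hb : b ∉ s) : s.map (swap a b).toEmbedding = s := by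
  ext x
  rw [mem_map_equiv, symm_swap, swap_apply_def]
  split_ifs <;> grind

theorem Finset.sum_powerset_insert_mul_erase {α R : Type*} [DecidableEq α] [Semiring R]
    {D : Finset α} {j : α} (hj : j ∉ D) (c : ℕ → R) (F : Finset α → R) :
    ∑ T ∈ (insert j D).powerset, c #T * F (T.erase j)
      = ∑ S ∈ D.powerset, (c #S + c (#S + 1)) * F S := by
  rw [sum_powerset_insert hj, ← sum_add_distrib]
  refine sum_congr rfl fun S hS => ?_
  have hjS : j ∉ S := fun h => hj (mem_powerset.1 hS h)
  rw [erase_eq_of_notMem hjS, erase_insert hjS, card_insert_of_notMem hjS, add_mul]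

theorem factorial_add_factorial_div_factorial {n l : ℕ} (hl : l + 2 ≤ n) :
    ((l ! * (n - 1 - l)! : ℝ) + (l + 1)! * (n - 1 - (l + 1))!) / n !
      = 1 / ((n : ℝ) - 1) * ((n - 2).choose l : ℝ)⁻¹ := by
  obtain ⟨b, rfl⟩ : ∃ b, n = l + b + 2 := ⟨n - 2 - l, by omega⟩
  have hchoose : (l + b).choose l * l ! * b ! = (l + b)! := by
    rw [Nat.choose_symm_add, Nat.add_choose_mul_factorial_mul_factorial]
  simp only [show l + b + 2 - 1 - l = b + 1 by omega, show l + b + 2 - 1 - (l + 1) = b by omega,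
    show l + b + 2 - 2 = l + b by omega]
  rw [show l + b + 2 = l + b + 1 + 1 by ring, factorial_succ, factorial_succ, factorial_succ,
    factorial_succ, ← hchoose]
  have : (0 : ℝ) < (l + b).choose l := by exact_mod_cast Nat.choose_pos (by omega)
  have : (0 : ℝ) < l ! := by positivity
  have : (0 : ℝ) < b ! := by positivity
  push_cast
  rw [add_sub_cancel_right]
  have : (l : ℝ) + b + 1 ≠ 0 := by positivity
  field_simp
  ring

namespace WeightedVoting

section Game

variable {α : Type*} [DecidableEq α] (w : α → ℝ) (q : ℝ)

noncomputable def winning (S : Finset α) : ℝ := if q ≤ ∑ k ∈ S, w k then 1 else 0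

/-- Indicator that `S ∪ {j}` wins while `S ∪ {i}` loses. -/
noncomputable def exclusiveSwing (i j : α) (S : Finset α) : ℝ :=
  if q - w j ≤ ∑ k ∈ S, w k ∧ ∑ k ∈ S, w k < q - w i then 1 else 0

variable {w q}

theorem winning_insert_sub_winning_insert {i j : α} {S : Finset α} (hi : i ∉ S) (hj : j ∉ S)
    (hw : w i ≤ w j) :
    winning w q (insert j S) - winning w q (insert i S) = exclusiveSwing w q i j S := by
  simp only [winning, exclusiveSwing, sum_insert hi, sum_insert hj]
  split_ifs <;> grind

end Game

variable {n : ℕ}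

def predecessors (σ : Perm (Fin n)) (i : Fin n) : Finset (Fin n) :=
  univ.filter fun k => σ k < σ i

theorem card_predecessors (σ : Perm (Fin n)) (i : Fin n) : #(predecessors σ i) = σ i := by
  have : predecessors σ i = (Iio (σ i)).map σ.symm.toEmbedding := by
    ext k
    simp [predecessors, mem_map_equiv]
  rw [this, card_map, Fin.card_Iio]

theorem predecessors_mul (σ τ : Perm (Fin n)) (k : Fin n) :
    predecessors (σ * τ) k = (predecessors σ (τ k)).map τ.symm.toEmbedding := by
  ext x
  simp only [predecessors, mem_map_equiv, mem_filter, mem_univ, true_and, symm_symm]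
  rfl

/-- How the position of `k` compares with that of `i` in an ordering in which `T` is the set of
predecessors of `i`. -/
def relativeOrder (T : Finset (Fin n)) (i k : Fin n) : Ordering :=
  if k ∈ T then .lt else if k = i then .eq else .gt

theorem predecessors_eq_iff {σ : Perm (Fin n)} {i : Fin n} {T : Finset (Fin n)} (hi : i ∉ T)
    {m : Fin n} (hm : (m : ℕ) = #T) :
    predecessors σ i = T ↔ (compare · m) ∘ σ = relativeOrder T i := by
  constructor
  · intro h
    have hσi : σ i = m := Fin.ext (by rw [hm, ← h, card_predecessors])
    funext k
    have hk : k ∈ T ↔ σ k < m := by simp [← h, predecessors, hσi]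
    simp only [Function.comp_apply, relativeOrder]
    split_ifs with hkT hki
    · exact compare_lt_iff_lt.2 (hk.1 hkT)
    · rw [hki, hσi, compare_eq_iff_eq]
    · exact compare_gt_iff_gt.2 (lt_of_le_of_ne (not_lt.1 (mt hk.2 hkT))
        (hσi ▸ σ.injective.ne (Ne.symm hki)))
  · intro h
    have hσi : σ i = m := by simpa [relativeOrder, hi] using congrFun h i
    ext k
    have hk := congrFun h k
    simp only [Function.comp_apply, relativeOrder] at hk
    simp only [predecessors, mem_filter, mem_univ, true_and, hσi, ← compare_lt_iff_lt, hk]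
    split_ifs <;> simp_all

theorem card_predecessors_eq {i : Fin n} {T : Finset (Fin n)} (hi : i ∉ T) :
    #{σ : Perm (Fin n) | predecessors σ i = T} = (#T)! * (n - 1 - #T)! := by
  have hT : #T < n := by simpa using card_lt_univ_of_notMem hi
  set m : Fin n := ⟨#T, hT⟩
  have h_lt : ({k | relativeOrder T i k = .lt} : Finset _) = T := by
    ext k; by_cases k ∈ T <;> by_cases k = i <;> simp_all [relativeOrder]
  have h_eq : ({k | relativeOrder T i k = .eq} : Finset _) = {i} := by
    ext k; by_cases k ∈ T <;> by_cases k = i <;> simp_all [relativeOrder]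
  have h_gt : ({k | relativeOrder T i k = .gt} : Finset _) = (insert i T)ᶜ := by
    ext k; by_cases k ∈ T <;> by_cases k = i <;> simp_all [relativeOrder]
  have hfib : ∀ c, Fintype.card {k // relativeOrder T i k = c}
      = Fintype.card {x // compare x m = c} := by
    intro c
    cases c <;> simp only [Fintype.card_subtype, h_lt, h_eq, h_gt, compare_lt_iff_lt,
      compare_eq_iff_eq, compare_gt_iff_gt, filter_gt_eq_Iio, filter_lt_eq_Ioi, filter_eq',
      Fin.card_Iio, Fin.card_Ioi, mem_univ, if_true, card_singleton]
    · rfl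
    · rw [card_compl, card_insert_of_notMem hi, Fintype.card_fin]
      show n - (#T + 1) = n - 1 - #T
      omega
  rw [← Fintype.card_subtype,
    Fintype.card_congr (subtypeEquivRight fun σ => predecessors_eq_iff hi (m := m) rfl),
    Perm.card_comp_eq_of_card_fiber_eq _ _ hfib]
  -- the product over the three values of `Ordering`
  show _ * (_ * (_ * 1)) = _
  simp [hfib, m, Fintype.card_subtype, compare_lt_iff_lt, compare_gt_iff_gt, filter_gt_eq_Iio,
    filter_lt_eq_Ioi]

theorem sum_comp_predecessors (F : Finset (Fin n) → ℝ) (i : Fin n) :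
    ∑ σ : Perm (Fin n), F (predecessors σ i)
      = ∑ T ∈ (univ.erase i).powerset, ((#T)! * (n - 1 - #T)! : ℝ) * F T := by
  rw [← sum_fiberwise_of_maps_to (t := (univ.erase i).powerset) (g := (predecessors · i))]
  · refine sum_congr rfl fun T hT => ?_
    have hi : i ∉ T := fun h => by simpa using mem_powerset.1 hT h
    rw [sum_congr rfl fun σ hσ => congrArg F (mem_filter.1 hσ).2, sum_const,
      card_predecessors_eq hi, nsmul_eq_mul]
    push_cast
    rfl
  · intro σ _
    simp only [predecessors, mem_powerset, subset_iff, mem_filter, mem_erase, mem_univ, and_true,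
      true_and]
    rintro x hx rfl
    exact lt_irrefl _ hx

variable (w : Fin n → ℝ) (q : ℝ)

noncomputable def marginal (σ : Perm (Fin n)) (i : Fin n) : ℝ :=
  winning w q (insert i (predecessors σ i)) - winning w q (predecessors σ i)

theorem shapley_eq_sum_marginal (i : Fin n) :
    shapley n w q i = (∑ σ, marginal w q σ i) / n ! := rfl

variable {w q}

theorem marginal_mul_swap_sub_marginal {i j : Fin n} (hw : w i ≤ w j) (σ : Perm (Fin n)) :
    marginal w q (σ * swap i j) j - marginal w q σ i
      = exclusiveSwing w q i j ((predecessors σ i).erase j) := by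
  have hiA : i ∉ predecessors σ i := by simp [predecessors]
  rw [marginal, marginal, predecessors_mul, swap_apply_right, symm_swap]
  generalize predecessors σ i = A at hiA ⊢
  by_cases hjA : j ∈ A
  · obtain ⟨B, hjB, rfl⟩ : ∃ B, j ∉ B ∧ A = insert j B :=
      ⟨A.erase j, notMem_erase j A, (insert_erase hjA).symm⟩
    have hiB : i ∉ B := fun h => hiA (mem_insert_of_mem h)
    rw [erase_insert hjB, map_insert, coe_toEmbedding, swap_apply_right,
      map_swap_of_notMem hiB hjB, insert_comm, ← winning_insert_sub_winning_insert hiB hjB hw]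
    ring
  · rw [erase_eq_of_notMem hjA, map_swap_of_notMem hiA hjA,
      ← winning_insert_sub_winning_insert hiA hjA hw]
    ring

theorem shapley_sub_shapley {i j : Fin n} (hw : w i ≤ w j) :
    shapley n w q j - shapley n w q i
      = (∑ σ, exclusiveSwing w q i j ((predecessors σ i).erase j)) / n ! := by
  rw [shapley_eq_sum_marginal, shapley_eq_sum_marginal, ← sub_div,
    ← Equiv.sum_comp (Equiv.mulRight (swap i j)), ← sum_sub_distrib]
  simp only [coe_mulRight, marginal_mul_swap_sub_marginal hw]

end WeightedVoting

theorem stmt10_general (n : ℕ) (w : Fin n → ℝ) (q : ℝ)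
    (i j : Fin n) (hij : i ≠ j) (hw : w i ≤ w j) :
    shapley n w q j - shapley n w q i
      = (1/((n:ℝ)-1)) * ∑ l ∈ Finset.range (n-1),
          (((Finset.univ \ {i, j}).powersetCard l).card : ℝ)⁻¹ *
            ∑ S ∈ (Finset.univ \ {i, j}).powersetCard l,
              (if q - w j ≤ ∑ k ∈ S, w k ∧ (∑ k ∈ S, w k) < q - w i
               then (1:ℝ) else 0) := by
  set D : Finset (Fin n) := univ \ {i, j}
  have hjD : j ∉ D := by simp [D]
  have hD : univ.erase i = insert j D := by
    ext k; by_cases k = i <;> by_cases k = j <;> simp_all [D]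
  have hcardD : #D = n - 2 := by simp [D, card_univ_sdiff, card_pair hij]
  have hn : 2 ≤ n := by simpa [card_pair hij] using card_le_univ ({i, j} : Finset (Fin n))
  rw [WeightedVoting.shapley_sub_shapley hw,
    WeightedVoting.sum_comp_predecessors fun T => WeightedVoting.exclusiveSwing w q i j (T.erase j),
    hD, sum_powerset_insert_mul_erase hjD fun t => (t ! * (n - 1 - t)! : ℝ), sum_div,
    sum_powerset, hcardD, show n - 2 + 1 = n - 1 by omega, mul_sum]
  refine sum_congr rfl fun l hl => ?_
  have hl : l + 2 ≤ n := by rw [mem_range] at hl; omega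
  rw [card_powersetCard, hcardD, mul_sum, mul_sum]
  refine sum_congr rfl fun S hS => ?_
  rw [(mem_powersetCard.1 hS).2, mul_div_right_comm, factorial_add_factorial_div_factorial hl,
    WeightedVoting.exclusiveSwing]
  ring

/-- The difference formula: for `wᵢ ≤ wⱼ`,
`φⱼ - φᵢ = (1/(n-1)) ∑_{ℓ=0}^{n-2} Pr_{S ∈ ([N\{i,j}] choose ℓ)}[q - wⱼ ≤ w(S) < q - wᵢ]`. -/
theorem stmt10 (n : ℕ) (w : Fin n → ℝ) (hpos : ∀ i, 0 < w i) (q : ℝ)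
    (i j : Fin n) (hij : i ≠ j) (hw : w i ≤ w j) :
    shapley n w q j - shapley n w q i
      = (1/((n:ℝ)-1)) * ∑ l ∈ Finset.range (n-1),
          (((Finset.univ \ {i, j}).powersetCard l).card : ℝ)⁻¹ *
            ∑ S ∈ (Finset.univ \ {i, j}).powersetCard l,
              (if q - w j ≤ ∑ k ∈ S, w k ∧ (∑ k ∈ S, w k) < q - w i
               then (1:ℝ) else 0) :=
  stmt10_general n w q i j hij hw
end

section
/- Let w₁ > ⋯ > wₙ > 0 be super-increasing with quota q ∈ (0, w(N)], and let A(q) = {a₀ < ⋯ < a_r}. For any agent i < n: (1) if i and i+1 are both in A(q) or both not in A(q), then φᵢ(q) = φ_{i+1}(q); (2) if i ∉ A(q) and i+1 ∈ A(q), then φᵢ(q) ≥ φ_{i+1}(q), with equality iff i+1 = a_r; (3) if i ∈ A(q) and i+1 ∉ A(q), then φᵢ(q) > φ_{i+1}(q). -/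
open Finset

section SuperIncreasing

variable {ι : Type*} [LinearOrder ι]

def SuperIncreasing [Fintype ι] (f : ι → ℝ) : Prop :=
  ∀ i, ∑ j ∈ univ.filter (i < ·), f j < f i

def LexLT (S T : Finset ι) : Prop :=
  ∃ k ∈ T, k ∉ S ∧ ∀ l < k, (l ∈ S ↔ l ∈ T)

theorem sum_eq_sum_lt_add_ite_add_sum_gt {M : Type*} [AddCommMonoid M] (f : ι → M)
    (S : Finset ι) (k : ι) :
    ∑ x ∈ S, f x = ∑ x ∈ S.filter (· < k), f x + (if k ∈ S then f k else 0)
      + ∑ x ∈ S.filter (k < ·), f x := by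
  have hsplit : ∀ x, f x = ((if x < k then f x else 0) + (if x = k then f x else 0))
      + (if k < x then f x else 0) := by
    intro x
    rcases lt_trichotomy x k with h | rfl | h
    · simp [h, h.ne, h.not_gt]
    · simp
    · simp [h, h.ne', h.not_gt]
  rw [sum_congr rfl fun x _ => hsplit x, sum_add_distrib, sum_add_distrib, sum_filter,
    sum_filter, sum_ite_eq']

theorem LexLT.sum_lt_sum [Fintype ι] {f : ι → ℝ} (hpos : ∀ i, 0 < f i) (hf : SuperIncreasing f)
    {S T : Finset ι} (h : LexLT S T) : ∑ l ∈ S, f l < ∑ l ∈ T, f l := by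
  obtain ⟨k, hkT, hkS, hagree⟩ := h
  have hhead : S.filter (· < k) = T.filter (· < k) := by
    ext l
    simp only [mem_filter]
    exact ⟨fun h => ⟨(hagree l h.2).1 h.1, h.2⟩, fun h => ⟨(hagree l h.2).2 h.1, h.2⟩⟩
  have htail : ∑ l ∈ S.filter (k < ·), f l < f k :=
    (sum_le_sum_of_subset_of_nonneg (filter_subset_filter _ (subset_univ S))
      fun l _ _ => (hpos l).le).trans_lt (hf k)
  have htailT : 0 ≤ ∑ l ∈ T.filter (k < ·), f l := sum_nonneg fun l _ => (hpos l).le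
  rw [sum_eq_sum_lt_add_ite_add_sum_gt f S k, sum_eq_sum_lt_add_ite_add_sum_gt f T k, hhead,
    if_neg hkS, if_pos hkT]
  linarith

theorem lexLT_or_lexLT_of_ne {S T : Finset ι} (h : S ≠ T) : LexLT S T ∨ LexLT T S := by
  have hne : (symmDiff S T).Nonempty := by
    rwa [nonempty_iff_ne_empty, Ne, ← bot_eq_empty, symmDiff_eq_bot]
  set k := (symmDiff S T).min' hne
  have hagree : ∀ l < k, (l ∈ S ↔ l ∈ T) := by
    intro l hl
    by_contra hST
    exact (min'_le _ l (by rw [mem_symmDiff]; tauto)).not_gt hl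
  rcases mem_symmDiff.mp (min'_mem _ hne) with ⟨hS, hT⟩ | ⟨hT, hS⟩
  · exact .inr ⟨k, hS, hT, fun l hl => (hagree l hl).symm⟩
  · exact .inl ⟨k, hT, hS, hagree⟩

theorem SuperIncreasing.sum_lt_sum_iff [Fintype ι] {f : ι → ℝ} (hpos : ∀ i, 0 < f i)
    (hf : SuperIncreasing f) {S T : Finset ι} :
    ∑ l ∈ S, f l < ∑ l ∈ T, f l ↔ LexLT S T := by
  refine ⟨fun h => ?_, (·.sum_lt_sum hpos hf)⟩
  have hne : S ≠ T := by rintro rfl; exact h.false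
  exact (lexLT_or_lexLT_of_ne hne).resolve_right fun h' => (h'.sum_lt_sum hpos hf).not_gt h

theorem SuperIncreasing.sum_le_sum_iff [Fintype ι] {f g : ι → ℝ} (hfpos : ∀ i, 0 < f i)
    (hf : SuperIncreasing f) (hgpos : ∀ i, 0 < g i) (hg : SuperIncreasing g)
    {S T : Finset ι} :
    ∑ l ∈ S, f l ≤ ∑ l ∈ T, f l ↔ ∑ l ∈ S, g l ≤ ∑ l ∈ T, g l := by
  rw [← not_lt, ← not_lt, hf.sum_lt_sum_iff hfpos, hg.sum_lt_sum_iff hgpos]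

end SuperIncreasing

section BinaryCode

variable {n : ℕ}

def binaryCode (S : Finset (Fin n)) : ℕ := ∑ k ∈ S, 2 ^ (n - 1 - (k : ℕ))

theorem binaryCode_lt_of_forall_lt {S : Finset (Fin n)} {k : Fin n} (h : ∀ l ∈ S, k < l) :
    binaryCode S < 2 ^ (n - 1 - (k : ℕ)) := by
  have hinj : Set.InjOn (fun l : Fin n => n - 1 - (l : ℕ)) S := by
    intro a _ b _ hab
    have := a.isLt; have := b.isLt
    exact Fin.ext (by simp only at hab; omega)
  rw [binaryCode, ← sum_image (f := (2 ^ ·)) hinj]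
  refine Nat.geomSum_lt le_rfl ?_
  simp only [mem_image]
  rintro _ ⟨l, hl, rfl⟩
  have := Fin.lt_def.mp (h l hl); have := l.isLt
  omega

theorem binaryCode_filter_gt_lt (S : Finset (Fin n)) (k : Fin n) :
    binaryCode (S.filter (k < ·)) < 2 ^ (n - 1 - (k : ℕ)) :=
  binaryCode_lt_of_forall_lt fun _ hl => (mem_filter.mp hl).2

theorem superIncreasing_two_pow :
    SuperIncreasing (fun k : Fin n => (2 : ℝ) ^ (n - 1 - (k : ℕ))) := by
  intro k
  have h := binaryCode_filter_gt_lt univ k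
  rw [binaryCode] at h
  dsimp only
  exact_mod_cast h

theorem SuperIncreasing.sum_le_sum_iff_binaryCode_le {w : Fin n → ℝ} (hpos : ∀ i, 0 < w i)
    (hw : SuperIncreasing w) {S T : Finset (Fin n)} :
    ∑ l ∈ S, w l ≤ ∑ l ∈ T, w l ↔ binaryCode S ≤ binaryCode T := by
  rw [hw.sum_le_sum_iff hpos (fun _ => by positivity) superIncreasing_two_pow, binaryCode,
    binaryCode, ← Nat.cast_le (α := ℝ)]
  push_cast
  rfl

theorem SuperIncreasing.le_sum_iff_binaryCode_le {w : Fin n → ℝ} (hpos : ∀ i, 0 < w i)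
    (hw : SuperIncreasing w) {q : ℝ} {A P : Finset (Fin n)}
    (hPA : binaryCode P + 1 = binaryCode A) (hP : ∑ l ∈ P, w l < q) (hA : q ≤ ∑ l ∈ A, w l)
    (S : Finset (Fin n)) :
    q ≤ ∑ l ∈ S, w l ↔ binaryCode A ≤ binaryCode S := by
  constructor
  · intro hq
    by_contra! hSA
    have : ∑ l ∈ S, w l ≤ ∑ l ∈ P, w l := (hw.sum_le_sum_iff_binaryCode_le hpos).2 (by omega)
    linarith
  · exact fun h => hA.trans ((hw.sum_le_sum_iff_binaryCode_le hpos).2 h)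

theorem binaryCode_insert {S : Finset (Fin n)} {k : Fin n} (hk : k ∉ S) :
    binaryCode (insert k S) = binaryCode S + 2 ^ (n - 1 - (k : ℕ)) := by
  rw [binaryCode, sum_insert hk, add_comm, binaryCode]

theorem binaryCode_pos_iff {S : Finset (Fin n)} : 0 < binaryCode S ↔ S.Nonempty := by
  simp only [binaryCode, sum_pos_iff, Nat.pos_of_ne_zero (pow_ne_zero _ two_ne_zero), and_true]
  rfl

section Adjacent

variable {i j : Fin n}

theorem two_pow_eq_two_mul_of_adjacent (hij : (j : ℕ) = i + 1) :
    2 ^ (n - 1 - (i : ℕ)) = 2 * 2 ^ (n - 1 - (j : ℕ)) := by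
  rw [← pow_succ']; congr 1; have := j.isLt; omega

theorem binaryCode_eq_of_adjacent (hij : (j : ℕ) = i + 1) (S : Finset (Fin n)) :
    binaryCode S = binaryCode (S.filter (· < i)) + (if i ∈ S then 2 * 2 ^ (n - 1 - (j : ℕ)) else 0)
      + (if j ∈ S then 2 ^ (n - 1 - (j : ℕ)) else 0) + binaryCode (S.filter (j < ·)) := by
  have hbetween : (S.filter (i < ·)).filter (· < j) = ∅ := by
    rw [filter_filter]
    exact filter_false_of_mem fun l _ => by rw [Fin.lt_def, Fin.lt_def]; omega
  have hj : j ∈ S.filter (i < ·) ↔ j ∈ S := by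
    rw [mem_filter, Fin.lt_def, and_iff_left (by omega)]
  have htail : (S.filter (i < ·)).filter (j < ·) = S.filter (j < ·) := by
    rw [filter_filter]
    exact filter_congr fun l _ => by rw [Fin.lt_def, Fin.lt_def]; omega
  rw [binaryCode, sum_eq_sum_lt_add_ite_add_sum_gt _ S i,
    sum_eq_sum_lt_add_ite_add_sum_gt _ (S.filter (i < ·)) j, hbetween, htail, sum_empty,
    two_pow_eq_two_mul_of_adjacent hij, if_congr hj rfl rfl, binaryCode, binaryCode]
  ring

theorem four_mul_dvd_binaryCode_filter_lt (hij : (j : ℕ) = i + 1) (S : Finset (Fin n)) :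
    4 * 2 ^ (n - 1 - (j : ℕ)) ∣ binaryCode (S.filter (· < i)) := by
  refine dvd_sum fun l hl => ?_
  have hl := Fin.lt_def.mp (mem_filter.mp hl).2
  have := j.isLt
  rw [show 4 * 2 ^ (n - 1 - (j : ℕ)) = 2 ^ (n - 1 - (j : ℕ) + 2) by ring]
  exact pow_dvd_pow 2 (by omega)

theorem mem_cases_of_swing (hij : (j : ℕ) = i + 1) {A S : Finset (Fin n)} (hiS : i ∉ S)
    (hjS : j ∉ S) (hlow : binaryCode (insert j S) < binaryCode A)
    (hhigh : binaryCode A ≤ binaryCode (insert i S)) :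
    (i ∈ A ∧ j ∉ A) ∨ (i ∉ A ∧ j ∈ A ∧ ∃ k ∈ A, j < k) := by
  rw [binaryCode_insert hiS, two_pow_eq_two_mul_of_adjacent hij] at hhigh
  rw [binaryCode_insert hjS] at hlow
  have hS := binaryCode_eq_of_adjacent hij S
  have hA := binaryCode_eq_of_adjacent hij A
  have hStail := binaryCode_filter_gt_lt S j
  have hAtail := binaryCode_filter_gt_lt A j
  obtain ⟨c, hc⟩ := four_mul_dvd_binaryCode_filter_lt hij S
  obtain ⟨C, hC⟩ := four_mul_dvd_binaryCode_filter_lt hij A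
  rw [if_neg hiS, if_neg hjS, hc] at hS
  rw [hC] at hA
  set m := 2 ^ (n - 1 - (j : ℕ))
  -- the codes of `insert j S`, `A` and `insert i S` share their bits before `i`
  have hcC : c = C := by
    have h₁ : 4 * m * c < 4 * m * (C + 1) := by
      rw [mul_add, mul_one]; split_ifs at hA <;> omega
    have h₂ : 4 * m * C < 4 * m * (c + 1) := by
      rw [mul_add, mul_one]; split_ifs at hA <;> omega
    have := Nat.lt_of_mul_lt_mul_left h₁
    have := Nat.lt_of_mul_lt_mul_left h₂
    omega
  subst hcC
  split_ifs at hA with hiA hjA hjA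
  · omega
  · exact .inl ⟨hiA, hjA⟩
  · exact .inr ⟨hiA, hjA, filter_nonempty_iff.1 (binaryCode_pos_iff.1
      (show 0 < binaryCode (A.filter (j < ·)) by omega))⟩
  · omega

theorem exists_swing_of_mem_cases (hij : (j : ℕ) = i + 1) {A : Finset (Fin n)}
    (hA : (i ∈ A ∧ j ∉ A) ∨ (i ∉ A ∧ j ∈ A ∧ ∃ k ∈ A, j < k)) :
    ∃ S, i ∉ S ∧ j ∉ S ∧ binaryCode (insert j S) < binaryCode A ∧
      binaryCode A ≤ binaryCode (insert i S) := by
  have hpow := two_pow_eq_two_mul_of_adjacent hij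
  have hm_pos : 0 < 2 ^ (n - 1 - (j : ℕ)) := by positivity
  rcases hA with ⟨hiA, hjA⟩ | ⟨hiA, hjA, hk⟩
  · have hjS : j ∉ A.erase i := fun h => hjA (mem_of_mem_erase h)
    have hcode := binaryCode_insert (notMem_erase i A)
    rw [insert_erase hiA] at hcode
    refine ⟨A.erase i, notMem_erase i A, hjS, ?_, ?_⟩
    · rw [binaryCode_insert hjS]; omega
    · rw [insert_erase hiA]
  · have hiS : i ∉ A.filter (· < i) := fun h => lt_irrefl i (mem_filter.mp h).2
    have hjS : j ∉ A.filter (· < i) := fun h => by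
      have := Fin.lt_def.mp (mem_filter.mp h).2; omega
    have htail_pos : 0 < binaryCode (A.filter (j < ·)) :=
      binaryCode_pos_iff.2 (filter_nonempty_iff.2 hk)
    have htail := binaryCode_filter_gt_lt A j
    have hcode := binaryCode_eq_of_adjacent hij A
    rw [if_neg hiA, if_pos hjA] at hcode
    refine ⟨A.filter (· < i), hiS, hjS, ?_, ?_⟩
    · rw [binaryCode_insert hjS]; omega
    · rw [binaryCode_insert hiS]; omega

theorem exists_swing_iff (hij : (j : ℕ) = i + 1) (A : Finset (Fin n)) :
    (∃ S, i ∉ S ∧ j ∉ S ∧ binaryCode (insert j S) < binaryCode A ∧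
        binaryCode A ≤ binaryCode (insert i S)) ↔
      (i ∈ A ∧ j ∉ A) ∨ (i ∉ A ∧ j ∈ A ∧ ∃ k ∈ A, j < k) :=
  ⟨fun ⟨_, hiS, hjS, hlow, hhigh⟩ => mem_cases_of_swing hij hiS hjS hlow hhigh,
    exists_swing_of_mem_cases hij⟩

end Adjacent

end BinaryCode

section ShapleyValue

open Equiv

variable {n : ℕ}

def predecessors (σ : Perm (Fin n)) (i : Fin n) : Finset (Fin n) :=
  univ.filter fun k => σ k < σ i

noncomputable def shapleyValue (v : Finset (Fin n) → ℝ) (i : Fin n) : ℝ :=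
  (∑ σ : Perm (Fin n), (v (insert i (predecessors σ i)) - v (predecessors σ i))) / n.factorial

theorem shapley_eq_shapleyValue (w : Fin n → ℝ) (q : ℝ) :
    shapley n w q = shapleyValue fun S => if q ≤ ∑ j ∈ S, w j then 1 else 0 :=
  rfl

theorem exists_perm_lt_iff_of_injective {α : Type*} [LinearOrder α] {f : Fin n → α}
    (hf : Function.Injective f) : ∃ σ : Perm (Fin n), ∀ a b, σ a < σ b ↔ f a < f b := by
  have hmono : StrictMono (f ∘ Tuple.sort f) :=
    (Tuple.monotone_sort f).strictMono_of_injective (hf.comp (Tuple.sort f).injective)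
  refine ⟨(Tuple.sort f)⁻¹, fun a b => ?_⟩
  rw [← hmono.lt_iff_lt]
  simp [Perm.inv_def]

theorem exists_predecessors_eq {i : Fin n} {S : Finset (Fin n)} (hi : i ∉ S) :
    ∃ σ, predecessors σ i = S := by
  -- order the agents as: `S`, then `i`, then everybody else
  let rank : Fin n → ℕ := fun k => if k ∈ S then 0 else if k = i then 1 else 2
  obtain ⟨σ, hσ⟩ := exists_perm_lt_iff_of_injective (f := fun k => toLex (rank k, k))
    fun a b h => congrArg (fun x => (ofLex x).2) h
  refine ⟨σ, ?_⟩
  ext k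
  simp only [predecessors, mem_filter, mem_univ, true_and, hσ, Prod.Lex.toLex_lt_toLex, rank,
    if_neg hi]
  by_cases hk : k ∈ S <;> by_cases hki : k = i <;> simp [hk, hki]

theorem notMem_predecessors_self (σ : Perm (Fin n)) (i : Fin n) : i ∉ predecessors σ i := by
  simp [predecessors]

theorem mem_predecessors_mul_swap {σ : Perm (Fin n)} {i j k : Fin n} :
    k ∈ predecessors (σ * swap i j) j ↔ swap i j k ∈ predecessors σ i := by
  simp [predecessors]

theorem sub_marginal_mul_swap (v : Finset (Fin n) → ℝ) {i j : Fin n} (hij : i ≠ j)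
    (σ : Perm (Fin n)) :
    (v (insert i (predecessors σ i)) - v (predecessors σ i))
        - (v (insert j (predecessors (σ * swap i j) j)) - v (predecessors (σ * swap i j) j)) =
      v (insert i ((predecessors σ i).erase j)) - v (insert j ((predecessors σ i).erase j)) := by
  have hi := notMem_predecessors_self σ i
  by_cases hj : j ∈ predecessors σ i
  · have hswap : predecessors (σ * swap i j) j = insert i ((predecessors σ i).erase j) := by
      ext k
      rw [mem_predecessors_mul_swap, mem_insert, mem_erase]
      rcases eq_or_ne k i with rfl | hki
      · simp [hj]
      rcases eq_or_ne k j with rfl | hkj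
      · simp [hi, hki]
      · simp [swap_apply_of_ne_of_ne hki hkj, hki, hkj]
    rw [hswap, insert_comm, insert_erase hj]
    ring
  · have hswap : predecessors (σ * swap i j) j = predecessors σ i := by
      ext k
      rw [mem_predecessors_mul_swap]
      rcases eq_or_ne k i with rfl | hki
      · simp [hi, hj]
      rcases eq_or_ne k j with rfl | hkj
      · simp [hi, hj]
      · rw [swap_apply_of_ne_of_ne hki hkj]
    rw [hswap, erase_eq_of_notMem hj]
    ring

theorem shapleyValue_sub_shapleyValue (v : Finset (Fin n) → ℝ) {i j : Fin n} (hij : i ≠ j) :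
    shapleyValue v i - shapleyValue v j =
      (∑ σ : Perm (Fin n), (v (insert i ((predecessors σ i).erase j))
        - v (insert j ((predecessors σ i).erase j)))) / n.factorial := by
  rw [shapleyValue, shapleyValue, div_sub_div_same,
    ← Equiv.sum_comp (Equiv.mulRight (swap i j))
      (fun σ => v (insert j (predecessors σ j)) - v (predecessors σ j)),
    ← sum_sub_distrib]
  simp only [coe_mulRight, sub_marginal_mul_swap v hij]

variable {v : Finset (Fin n) → ℝ} {i j : Fin n}

theorem notMem_erase_predecessors (σ : Perm (Fin n)) : i ∉ (predecessors σ i).erase j :=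
  fun h => notMem_predecessors_self σ i (mem_of_mem_erase h)

theorem shapleyValue_le_shapleyValue
    (h : ∀ S, i ∉ S → j ∉ S → v (insert j S) ≤ v (insert i S)) :
    shapleyValue v j ≤ shapleyValue v i := by
  rcases eq_or_ne i j with rfl | hij
  · rfl
  rw [← sub_nonneg, shapleyValue_sub_shapleyValue v hij]
  exact div_nonneg (sum_nonneg fun σ _ =>
    sub_nonneg.2 (h _ (notMem_erase_predecessors σ) (notMem_erase j _))) (Nat.cast_nonneg _)

theorem shapleyValue_eq_shapleyValue_iff
    (h : ∀ S, i ∉ S → j ∉ S → v (insert j S) ≤ v (insert i S)) :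
    shapleyValue v i = shapleyValue v j ↔
      ∀ S, i ∉ S → j ∉ S → v (insert i S) = v (insert j S) := by
  rcases eq_or_ne i j with rfl | hij
  · simp
  rw [← sub_eq_zero, shapleyValue_sub_shapleyValue v hij, div_eq_zero_iff,
    or_iff_left (by positivity), sum_eq_zero_iff_of_nonneg fun σ _ =>
      sub_nonneg.2 (h _ (notMem_erase_predecessors σ) (notMem_erase j _))]
  simp only [mem_univ, true_implies, sub_eq_zero]
  refine ⟨fun hσ S hiS hjS => ?_, fun hS σ => hS _ (notMem_erase_predecessors σ) (notMem_erase j _)⟩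
  obtain ⟨σ, rfl⟩ := exists_predecessors_eq hiS
  simpa [erase_eq_of_notMem hjS] using hσ σ

end ShapleyValue

section BinaryThresholdGame

variable {n : ℕ}

noncomputable def binaryThresholdGame (A S : Finset (Fin n)) : ℝ :=
  if binaryCode A ≤ binaryCode S then 1 else 0

theorem SuperIncreasing.shapley_eq {w : Fin n → ℝ} (hpos : ∀ i, 0 < w i)
    (hw : SuperIncreasing w) {q : ℝ} {A P : Finset (Fin n)}
    (hPA : binaryCode P + 1 = binaryCode A) (hP : ∑ l ∈ P, w l < q) (hA : q ≤ ∑ l ∈ A, w l) :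
    shapley n w q = shapleyValue (binaryThresholdGame A) := by
  rw [shapley_eq_shapleyValue]
  congr 1
  funext S
  exact if_congr (hw.le_sum_iff_binaryCode_le hpos hPA hP hA S) rfl rfl

variable {A : Finset (Fin n)} {i j : Fin n}

theorem binaryCode_insert_lt_binaryCode_insert (hij : i < j) {S : Finset (Fin n)} (hi : i ∉ S)
    (hj : j ∉ S) : binaryCode (insert j S) < binaryCode (insert i S) := by
  rw [binaryCode_insert hi, binaryCode_insert hj]
  have := Fin.lt_def.mp hij; have := j.isLt
  exact Nat.add_lt_add_left (Nat.pow_lt_pow_right one_lt_two (by omega)) _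

theorem binaryThresholdGame_insert_le (hij : i < j) {S : Finset (Fin n)} (hi : i ∉ S)
    (hj : j ∉ S) : binaryThresholdGame A (insert j S) ≤ binaryThresholdGame A (insert i S) := by
  have := binaryCode_insert_lt_binaryCode_insert hij hi hj
  unfold binaryThresholdGame
  split_ifs <;> first | omega | norm_num

theorem shapleyValue_binaryThresholdGame_le (hij : i < j) :
    shapleyValue (binaryThresholdGame A) j ≤ shapleyValue (binaryThresholdGame A) i :=
  shapleyValue_le_shapleyValue fun _ => binaryThresholdGame_insert_le hij

theorem shapleyValue_binaryThresholdGame_eq_iff (hij : (j : ℕ) = i + 1) :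
    shapleyValue (binaryThresholdGame A) i = shapleyValue (binaryThresholdGame A) j ↔
      ¬((i ∈ A ∧ j ∉ A) ∨ (i ∉ A ∧ j ∈ A ∧ ∃ k ∈ A, j < k)) := by
  have hlt : i < j := Fin.lt_def.mpr (by omega)
  rw [shapleyValue_eq_shapleyValue_iff fun _ => binaryThresholdGame_insert_le hlt,
    ← exists_swing_iff hij]
  simp only [not_exists, not_and]
  refine forall_congr' fun S => forall₂_congr fun hi hj => ?_
  have := binaryCode_insert_lt_binaryCode_insert hlt hi hj
  unfold binaryThresholdGame
  split_ifs <;> simp <;> omega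

end BinaryThresholdGame

/-- `Pm` is the predecessor `A⁻` of `A` in the binary order, so `A = A(q)`;
`∀ k ∈ A, k ≤ j` says `j = a_r`. -/
theorem stmt13_general (n : ℕ) (w : Fin n → ℝ) (hpos : ∀ i, 0 < w i)
    (hsi : ∀ i : Fin n, (∑ j ∈ Finset.univ.filter (fun j => i < j), w j) < w i)
    (q : ℝ)
    (A Pm : Finset (Fin n))
    (hβ : (∑ i ∈ Pm, 2^(n - 1 - (i:ℕ)) : ℕ) + 1 = ∑ i ∈ A, 2^(n - 1 - (i:ℕ)))
    (hlo : (∑ i ∈ Pm, w i) < q) (hhi : q ≤ ∑ i ∈ A, w i)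
    (i j : Fin n) (hij : (j:ℕ) = (i:ℕ) + 1) :
    ((i ∈ A ↔ j ∈ A) → shapley n w q i = shapley n w q j) ∧
    (i ∉ A → j ∈ A →
      shapley n w q j ≤ shapley n w q i ∧
      (shapley n w q i = shapley n w q j ↔ ∀ k ∈ A, k ≤ j)) ∧
    (i ∈ A → j ∉ A → shapley n w q j < shapley n w q i) := by
  rw [SuperIncreasing.shapley_eq hpos hsi hβ hlo hhi]
  have hle := shapleyValue_binaryThresholdGame_le (A := A) (Fin.lt_def.mpr (by omega) : i < j)
  have heq := shapleyValue_binaryThresholdGame_eq_iff (A := A) hij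
  refine ⟨fun hiff => heq.2 (by tauto), fun hi hj => ⟨hle, heq.trans (by simp [hi, hj])⟩,
    fun hi hj => hle.lt_of_ne fun h => heq.1 h.symm (.inl ⟨hi, hj⟩)⟩

/-- Comparison of Shapley values of consecutive agents `i, i+1` for
super-increasing weights: `A` is the unique set with `q ∈ (w(A⁻), w(A)]`,
and `a_r = max A`. -/
theorem stmt13 (n : ℕ) (w : Fin n → ℝ) (hpos : ∀ i, 0 < w i) (hdec : StrictAnti w)
    (hsi : ∀ i : Fin n, (∑ j ∈ Finset.univ.filter (fun j => i < j), w j) < w i)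
    (q : ℝ) (hq1 : 0 < q) (hq2 : q ≤ ∑ i : Fin n, w i)
    (A Pm : Finset (Fin n))
    (hβ : (∑ i ∈ Pm, 2^(n - 1 - (i:ℕ)) : ℕ) + 1 = ∑ i ∈ A, 2^(n - 1 - (i:ℕ)))
    (hlo : (∑ i ∈ Pm, w i) < q) (hhi : q ≤ ∑ i ∈ A, w i)
    (i j : Fin n) (hij : (j:ℕ) = (i:ℕ) + 1) :
    ((i ∈ A ↔ j ∈ A) → shapley n w q i = shapley n w q j) ∧
    (i ∉ A → j ∈ A →
      shapley n w q j ≤ shapley n w q i ∧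
      (shapley n w q i = shapley n w q j ↔ ∀ k ∈ A, k ≤ j)) ∧
    (i ∈ A → j ∉ A → shapley n w q j < shapley n w q i) :=
  stmt13_general n w hpos hsi q A Pm hβ hlo hhi i j hij
end
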